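/- Fix integers d ≥ 1, k ≥ 1 and σ > 0. For each i ∈ {1,…,k} let g_i(x,y) be the joint density of a pair of independent Gaussians (N(d+i, (d+i)σ²), N(d+k-i, (d+k-i)σ²)). Then ∫∫ max_{1 ≤ i ≤ k} g_i(x,y) dx dy < (2(d+k)/d)·exp(k²/(2(d+k)σ²)). -/

import Mathlib

/-!
Each `g_i` is the product of the one-dimensional Gaussian densities with means `a = d + i`,
`c = d + k - i` and variances `aσ²`, `cσ²`. Since `(x - ν)² ≤ 2 (x - μ)² + 2 (μ - ν)²`, a density
of `N(μ, v)` is at most `√(w / v) · exp ((μ - ν)² / w)` times the density of `N(ν, w)` as soon as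
`2v ≤ w`. With `ν = d` and `w = 2(d + k)σ²` in both coordinates, every `g_i`, hence their maximum,
is bounded by `2(d + k)/√(ac) · exp ((i² + (k - i)²) / w) ≤ 2(d + k)/√(d(d + 1)) · exp (k² / w)`
times a probability density on `ℝ²`, and `√(d(d + 1)) > d` makes the final bound strict.
-/

open Real MeasureTheory

/-- Joint density of the pair of independent Gaussians
`(N(d+i, (d+i)σ²), N(d+k-i, (d+k-i)σ²))`. -/
noncomputable def gaussPairDensity (d k i : ℕ) (σ : ℝ) (x y : ℝ) : ℝ :=
  (1 / (2 * Real.pi * σ ^ 2 *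
      Real.sqrt (((d : ℝ) + i) * ((d : ℝ) + k - i)))) *
    Real.exp (-(x - ((d : ℝ) + i)) ^ 2 / (2 * ((d : ℝ) + i) * σ ^ 2)
      - (y - ((d : ℝ) + k - i)) ^ 2 / (2 * ((d : ℝ) + k - i) * σ ^ 2))

open ProbabilityTheory
open scoped NNReal

lemma gaussianPDFReal_le_mul_gaussianPDFReal {v w : ℝ≥0} (hv : v ≠ 0) (hvw : 2 * v ≤ w)
    (μ ν x : ℝ) :
    gaussianPDFReal μ v x ≤ √(w / v) * rexp ((μ - ν) ^ 2 / w) * gaussianPDFReal ν w x := by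
  have hv' : (0 : ℝ) < v := by positivity
  have hvw' : 2 * (v : ℝ) ≤ w := mod_cast hvw
  have hw' : (0 : ℝ) < w := by linarith
  have hexp : -(x - μ) ^ 2 / (2 * v) ≤ (μ - ν) ^ 2 / w + -(x - ν) ^ 2 / (2 * w) := by
    have hsq : (x - ν) ^ 2 ≤ 2 * (x - μ) ^ 2 + 2 * (μ - ν) ^ 2 := by
      nlinarith [sq_nonneg (x - 2 * μ + ν)]
    have hwid : (x - μ) ^ 2 / w ≤ (x - μ) ^ 2 / (2 * v) := by gcongr
    have : (x - ν) ^ 2 / (2 * w) ≤ (x - μ) ^ 2 / w + (μ - ν) ^ 2 / w := by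
      rw [← add_div, div_le_div_iff₀ (by positivity) hw']; nlinarith
    rw [neg_div, neg_div]; linarith
  have hpref : (√(2 * π * v))⁻¹ = √(w / v) * (√(2 * π * w))⁻¹ := by
    rw [← sqrt_inv, ← sqrt_inv, ← sqrt_mul (by positivity)]
    congr 1; field_simp
  calc gaussianPDFReal μ v x
      = √(w / v) * (√(2 * π * w))⁻¹ * rexp (-(x - μ) ^ 2 / (2 * v)) := by
        rw [gaussianPDFReal, hpref]
    _ ≤ √(w / v) * (√(2 * π * w))⁻¹ * rexp ((μ - ν) ^ 2 / w + -(x - ν) ^ 2 / (2 * w)) := by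
        gcongr
    _ = _ := by rw [gaussianPDFReal, exp_add]; ring

lemma gaussPairDensity_eq_mul_gaussianPDFReal {d k i : ℕ} (hik : i ≤ k) (σ x y : ℝ) :
    gaussPairDensity d k i σ x y =
      gaussianPDFReal (d + i) ((d + i) * σ ^ 2).toNNReal x *
        gaussianPDFReal (d + k - i) ((d + k - i) * σ ^ 2).toNNReal y := by
  have hc : (0 : ℝ) ≤ d + k - i := by
    have : (i : ℝ) ≤ k := mod_cast hik
    linarith [(d.cast_nonneg : (0 : ℝ) ≤ d)]
  have hpref : (√(2 * π * ((d + i) * σ ^ 2)))⁻¹ * (√(2 * π * ((d + k - i) * σ ^ 2)))⁻¹ =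
      1 / (2 * π * σ ^ 2 * √((d + i) * (d + k - i))) := by
    rw [← mul_inv, ← sqrt_mul (by positivity), one_div,
      show 2 * π * ((d + i) * σ ^ 2) * (2 * π * ((d + k - i) * σ ^ 2)) =
        (2 * π * σ ^ 2) ^ 2 * ((d + i) * (d + k - i)) by ring,
      sqrt_mul (by positivity), sqrt_sq (by positivity)]
  rw [gaussianPDFReal, gaussianPDFReal, Real.coe_toNNReal _ (by positivity),
    Real.coe_toNNReal _ (by positivity), gaussPairDensity, ← hpref,
    sub_eq_add_neg (-(x - _) ^ 2 / _), exp_add, ← neg_div]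
  ring_nf

lemma sqrt_mul_div_mul_sqrt_mul_div_le {B a c s m : ℝ} (ha : 0 < a) (hc : 0 < c) (hs : 0 < s)
    (hB : 0 ≤ B) (hm₀ : 0 < m) (hm : m ≤ a * c) :
    √(B * s / (a * s)) * √(B * s / (c * s)) ≤ B / √m := by
  rw [← sqrt_mul (by positivity), show B / √m = √(B ^ 2 / m) by
    rw [sqrt_div' _ hm₀.le, sqrt_sq hB]]
  refine sqrt_le_sqrt ?_
  calc B * s / (a * s) * (B * s / (c * s)) = B ^ 2 / (a * c) := by field_simp
    _ ≤ B ^ 2 / m := by gcongr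

lemma gaussPairDensity_le {d k i : ℕ} (hd : 1 ≤ d) (hi : i ∈ Finset.Icc 1 k) {σ : ℝ}
    (hσ : σ ≠ 0) (x y : ℝ) :
    gaussPairDensity d k i σ x y ≤
      2 * (d + k) / √(d * (d + 1)) * rexp (k ^ 2 / (2 * (d + k) * σ ^ 2)) *
        (gaussianPDFReal d (2 * (d + k) * σ ^ 2).toNNReal x *
          gaussianPDFReal d (2 * (d + k) * σ ^ 2).toNNReal y) := by
  obtain ⟨hi1, hik⟩ := Finset.mem_Icc.mp hi
  have hd' : (1 : ℝ) ≤ d := mod_cast hd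
  have hi1' : (1 : ℝ) ≤ i := mod_cast hi1
  have hik' : (i : ℝ) ≤ k := mod_cast hik
  have hs : 0 < σ ^ 2 := by positivity
  set A : ℝ := d + k
  set a : ℝ := d + i
  set c : ℝ := d + k - i
  set W := (2 * A * σ ^ 2).toNNReal
  have hW : (W : ℝ) = 2 * A * σ ^ 2 := Real.coe_toNNReal _ (by positivity)
  have ha : 0 < a := by linarith
  have hdc : (d : ℝ) ≤ c := by linarith
  have hc : 0 < c := by linarith
  have hvar {b : ℝ} (hb : 0 < b) (hbA : b ≤ A) :
      (b * σ ^ 2).toNNReal ≠ 0 ∧ 2 * (b * σ ^ 2).toNNReal ≤ W := by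
    refine ⟨by positivity, ?_⟩
    rw [← NNReal.coe_le_coe, NNReal.coe_mul, Real.coe_toNNReal _ (by positivity), hW]
    push_cast; nlinarith
  obtain ⟨hva, haW⟩ := hvar ha (by linarith)
  obtain ⟨hvc, hcW⟩ := hvar hc (by linarith)
  have hx := gaussianPDFReal_le_mul_gaussianPDFReal hva haW a d x
  have hy := gaussianPDFReal_le_mul_gaussianPDFReal hvc hcW c d y
  have hsqrt : √(W / (a * σ ^ 2).toNNReal) * √(W / (c * σ ^ 2).toNNReal) ≤
      2 * A / √(d * (d + 1)) := by
    rw [hW, Real.coe_toNNReal _ (mul_pos ha hs).le, Real.coe_toNNReal _ (mul_pos hc hs).le]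
    exact sqrt_mul_div_mul_sqrt_mul_div_le ha hc hs (by positivity) (by positivity)
      (by nlinarith)
  have hexp :
      rexp ((a - d) ^ 2 / W) * rexp ((c - d) ^ 2 / W) ≤ rexp (k ^ 2 / (2 * A * σ ^ 2)) := by
    rw [← exp_add, ← add_div, hW]
    gcongr
    nlinarith
  rw [gaussPairDensity_eq_mul_gaussianPDFReal hik]
  calc _ ≤ (√(W / (a * σ ^ 2).toNNReal) * rexp ((a - d) ^ 2 / W) * gaussianPDFReal d W x) *
        (√(W / (c * σ ^ 2).toNNReal) * rexp ((c - d) ^ 2 / W) * gaussianPDFReal d W y) :=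
        mul_le_mul hx hy (gaussianPDFReal_nonneg _ _ _)
          (mul_nonneg (by positivity) (gaussianPDFReal_nonneg _ _ _))
    _ = (√(W / (a * σ ^ 2).toNNReal) * √(W / (c * σ ^ 2).toNNReal)) *
          (rexp ((a - d) ^ 2 / W) * rexp ((c - d) ^ 2 / W)) *
          (gaussianPDFReal d W x * gaussianPDFReal d W y) := by ring
    _ ≤ _ := by
      gcongr
      exact mul_nonneg (gaussianPDFReal_nonneg _ _ _) (gaussianPDFReal_nonneg _ _ _)

lemma integrable_gaussianPDFReal_mul_gaussianPDFReal (μ ν : ℝ) (v w : ℝ≥0) :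
    Integrable fun p : ℝ × ℝ => gaussianPDFReal μ v p.1 * gaussianPDFReal ν w p.2 :=
  (integrable_gaussianPDFReal μ v).mul_prod (integrable_gaussianPDFReal ν w)

lemma integral_gaussianPDFReal_mul_gaussianPDFReal (μ ν : ℝ) {v w : ℝ≥0} (hv : v ≠ 0)
    (hw : w ≠ 0) : ∫ p : ℝ × ℝ, gaussianPDFReal μ v p.1 * gaussianPDFReal ν w p.2 = 1 := by
  rw [Measure.volume_eq_prod, integral_prod_mul, integral_gaussianPDFReal_eq_one μ hv,
    integral_gaussianPDFReal_eq_one ν hw, one_mul]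

theorem integral_max_gauss_density_lt (d k : ℕ) (σ : ℝ) (hd : 1 ≤ d) (hk : 1 ≤ k)
    (hσ : 0 < σ) :
    (∫ p : ℝ × ℝ,
        (Finset.Icc 1 k).sup' (Finset.nonempty_Icc.mpr hk)
          (fun i => gaussPairDensity d k i σ p.1 p.2)) <
      (2 * ((d : ℝ) + k) / d) * Real.exp (k ^ 2 / (2 * ((d : ℝ) + k) * σ ^ 2)) := by
  have hd' : (1 : ℝ) ≤ d := mod_cast hd
  set W := (2 * ((d : ℝ) + k) * σ ^ 2).toNNReal
  have hW : W ≠ 0 := by positivity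
  set C := 2 * ((d : ℝ) + k) / √(d * (d + 1)) * rexp (k ^ 2 / (2 * ((d : ℝ) + k) * σ ^ 2))
  have hbound (p : ℝ × ℝ) : (Finset.Icc 1 k).sup' (Finset.nonempty_Icc.mpr hk)
      (fun i => gaussPairDensity d k i σ p.1 p.2) ≤
        C * (gaussianPDFReal d W p.1 * gaussianPDFReal d W p.2) :=
    Finset.sup'_le _ _ fun i hi => gaussPairDensity_le hd hi hσ.ne' p.1 p.2
  have hnonneg (p : ℝ × ℝ) : 0 ≤ (Finset.Icc 1 k).sup' (Finset.nonempty_Icc.mpr hk)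
      (fun i => gaussPairDensity d k i σ p.1 p.2) :=
    Finset.le_sup'_of_le _ (Finset.left_mem_Icc.mpr hk) (by unfold gaussPairDensity; positivity)
  have hd_lt : (d : ℝ) < √(d * (d + 1)) := (lt_sqrt (by positivity)).mpr (by nlinarith)
  calc _ ≤ ∫ p : ℝ × ℝ, C * (gaussianPDFReal d W p.1 * gaussianPDFReal d W p.2) :=
        integral_mono_of_nonneg (ae_of_all _ hnonneg)
          ((integrable_gaussianPDFReal_mul_gaussianPDFReal _ _ _ _).const_mul C)
          (ae_of_all _ hbound)
    _ = C := by rw [integral_const_mul, integral_gaussianPDFReal_mul_gaussianPDFReal _ _ hW hW,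
        mul_one]
    _ < _ := mul_lt_mul_of_pos_right
        (div_lt_div_of_pos_left (by positivity) (by positivity) hd_lt) (exp_pos _)
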